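/- Let g : ℝ^m → ℝ^m be L-Lipschitz with ‖g(x)‖ ≤ G for all x ∈ ℝ^m, and let ĝ : ℝ^m → ℝ^m satisfy ‖ĝ(x) − g(x)‖ ≤ δ for all x ∈ ℝ^m. Let z : [a, b] → ℝ^m be differentiable with z'(t) = g(z(t)) for all t ∈ [a, b], fix 𝖳 ≥ 2, set Δt = (b−a)/(𝖳−1) and t_k = a + (k−1)Δt for k ∈ [𝖳], and define the inexact Euler iterates ẑ_1 = z(a), ẑ_{k+1} = ẑ_k + Δt·ĝ(ẑ_k). Then for every k ∈ [𝖳−1], ‖z(t_{k+1}) − ẑ_{k+1}‖ ≤ 3(b−a)e^{L(b−a)}·δ + (L·G/2)(b−a)e^{L(b−a)}·Δt. -/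

import Mathlib

/-!
Along the solution, `g ∘ z` is `L G`-Lipschitz, so one exact Euler step from `z(t)` misses
`z(t + Δt)` by at most `L G Δt² / 2`. One inexact step from a perturbed point amplifies the
previous error by `1 + L Δt` and adds `Δt δ` more. The discrete Grönwall inequality over the
`n = 𝖳 - 1` steps gives `n (Δt δ + L G Δt² / 2) e^{n L Δt} = (b - a)(δ + L G Δt / 2) e^{L(b - a)}`.
-/

noncomputable section

open Real Set

/-- `ℝ^m` with the Euclidean norm. -/
abbrev Euc (m : ℕ) : Type := EuclideanSpace ℝ (Fin m)

theorem le_mul_exp_of_le_one_add_mul_add {u : ℕ → ℝ} {q C : ℝ} {N : ℕ}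
    (hu : ∀ k, 0 ≤ u k) (hu0 : u 0 = 0) (hq : 0 ≤ q) (hC : 0 ≤ C)
    (hstep : ∀ k < N, u (k + 1) ≤ (1 + q) * u k + C) {k : ℕ} (hk : k ≤ N) :
    u k ≤ N * C * exp (N * q) := by
  -- Stopping the sequence at `N` makes the recursion hold for every index.
  have hstopped : ∀ n ≥ 0, u (min (n + 1) N) ≤ (1 + q) * u (min n N) + C := by
    intro n _
    rcases lt_or_ge n N with hn | hn
    · rw [min_eq_left hn, min_eq_left hn.le]
      exact hstep n hn
    · rw [min_eq_right hn, min_eq_right (by omega)]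
      nlinarith [hu N]
  have := discrete_gronwall (u := fun n => u (min n N)) (c := fun _ => q) (b := fun _ => C)
    (n₀ := 0) (by simpa using hu 0) hstopped (fun _ _ => hq) (fun _ _ => hC) (Nat.zero_le k)
  simp only [Nat.zero_min, hu0, min_eq_left hk, Finset.sum_const, Nat.card_Ico, nsmul_eq_mul,
    zero_add, Nat.sub_zero] at this
  calc u k ≤ k * C * exp (k * q) := this
    _ ≤ N * C * exp (N * q) := by
      have hkN : (k : ℝ) ≤ N := by exact_mod_cast hk
      gcongr

section

variable {E : Type*} [NormedAddCommGroup E] [NormedSpace ℝ E]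

def eulerStep (f : E → E) (h : ℝ) (x : E) : E := x + h • f x

theorem norm_sub_eulerStep_of_hasDerivAt_le {g : E → E} {z : ℝ → E} {a b L G : ℝ}
    (hL : 0 ≤ L) (hg : ∀ x y, ‖g x - g y‖ ≤ L * ‖x - y‖) (hG : ∀ x, ‖g x‖ ≤ G)
    (hz : ∀ t ∈ Icc a b, HasDerivAt z (g (z t)) t) (hab : a ≤ b) :
    ‖z b - eulerStep g (b - a) (z a)‖ ≤ L * G / 2 * (b - a) ^ 2 := by
  have hdrift : ∀ s ∈ Icc a b, ‖z s - z a‖ ≤ G * (s - a) :=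
    norm_image_sub_le_of_norm_deriv_le_segment' (fun t ht => (hz t ht).hasDerivWithinAt)
      fun t _ => hG (z t)
  have hf : ∀ s ∈ Icc a b, HasDerivAt (fun s => z s - eulerStep g (s - a) (z a))
      (g (z s) - g (z a)) s := by
    intro s hs
    have := (hz s hs).sub ((((hasDerivAt_id s).sub_const a).smul_const (g (z a))).const_add (z a))
    rwa [one_smul] at this
  have hB : ∀ s, HasDerivAt (fun s => L * G / 2 * (s - a) ^ 2) (L * G * (s - a)) s := by
    intro s
    refine ((((hasDerivAt_id' s).sub_const a).pow 2).const_mul (L * G / 2)).congr_deriv ?_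
    ring
  refine image_norm_le_of_norm_deriv_right_le_deriv_boundary
    (fun s hs => (hf s hs).continuousAt.continuousWithinAt)
    (fun s hs => (hf s (Ico_subset_Icc_self hs)).hasDerivWithinAt)
    (by simp [eulerStep]) hB (fun s hs => ?_) (right_mem_Icc.2 hab)
  calc ‖g (z s) - g (z a)‖ ≤ L * ‖z s - z a‖ := hg _ _
    _ ≤ L * (G * (s - a)) := by gcongr; exact hdrift s (Ico_subset_Icc_self hs)
    _ = L * G * (s - a) := by ring

theorem norm_sub_eulerStep_le_add {g ghat : E → E} {L δ h : ℝ}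
    (hg : ∀ x y, ‖g x - g y‖ ≤ L * ‖x - y‖) (hδ : ∀ x, ‖ghat x - g x‖ ≤ δ) (hh : 0 ≤ h)
    (u u' v : E) :
    ‖u' - eulerStep ghat h v‖ ≤ (1 + L * h) * ‖u - v‖ + ‖u' - eulerStep g h u‖ + h * δ := by
  have hsplit : u' - eulerStep ghat h v =
      (u' - eulerStep g h u) + ((u - v) + h • (g u - g v)) + h • (g v - ghat v) := by
    simp only [eulerStep]; module
  rw [hsplit]
  calc _ ≤ ‖u' - eulerStep g h u‖ + (‖u - v‖ + h * (L * ‖u - v‖)) + h * δ := by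
        refine (norm_add₃_le).trans (add_le_add_three le_rfl ?_ ?_)
        · refine (norm_add_le _ _).trans (add_le_add le_rfl ?_)
          rw [norm_smul, norm_of_nonneg hh]
          exact mul_le_mul_of_nonneg_left (hg u v) hh
        · rw [norm_smul, norm_of_nonneg hh, norm_sub_rev]
          exact mul_le_mul_of_nonneg_left (hδ v) hh
    _ = _ := by ring

theorem norm_sub_eulerStep_le_of_hasDerivAt {g ghat : E → E} {z : ℝ → E} {t h L G δ : ℝ}
    (hL : 0 ≤ L) (hg : ∀ x y, ‖g x - g y‖ ≤ L * ‖x - y‖) (hG : ∀ x, ‖g x‖ ≤ G)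
    (hδ : ∀ x, ‖ghat x - g x‖ ≤ δ) (hz : ∀ s ∈ Icc t (t + h), HasDerivAt z (g (z s)) s)
    (hh : 0 ≤ h) (v : E) :
    ‖z (t + h) - eulerStep ghat h v‖ ≤ (1 + L * h) * ‖z t - v‖ + (h * δ + L * G / 2 * h ^ 2) := by
  have hlocal := norm_sub_eulerStep_of_hasDerivAt_le hL hg hG hz (le_add_of_nonneg_right hh)
  rw [add_sub_cancel_left] at hlocal
  linarith [norm_sub_eulerStep_le_add hg hδ hh (z t) (z (t + h)) v]

end

/-- Let `g : ℝ^m → ℝ^m` be `L`-Lipschitz with `‖g‖ ≤ G`, and let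
`ĝ` satisfy `‖ĝ − g‖ ≤ δ` everywhere.  Let `z` solve `z' = g(z)` on `[a,b]`, let
`Δt = (b−a)/(nT−1)` and `t_k = a + (k−1)Δt`, and let `ẑ_1 = z(a)`,
`ẑ_{k+1} = ẑ_k + Δt·ĝ(ẑ_k)` be the inexact Euler iterates (0-indexed below, so
`zh 0 = z a` and `t_{k+1} = a + (k+1)·Δt` for `k+1 ≤ nT−1`).  Then for every `k ∈ [nT−1]`,
`‖z(t_{k+1}) − ẑ_{k+1}‖ ≤ 3(b−a)e^{L(b−a)}·δ + (L·G/2)(b−a)e^{L(b−a)}·Δt`. -/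
theorem euler_global_error
    (m nT : ℕ) (hnT : 2 ≤ nT) (a b : ℝ) (hab : a ≤ b)
    (L G δ : ℝ) (hL : 0 ≤ L)
    (g ghat : Euc m → Euc m)
    (hg : ∀ x y : Euc m, ‖g x - g y‖ ≤ L * ‖x - y‖)
    (hG : ∀ x : Euc m, ‖g x‖ ≤ G)
    (hδ : ∀ x : Euc m, ‖ghat x - g x‖ ≤ δ)
    (z : ℝ → Euc m)
    (hz : ∀ t ∈ Icc a b, HasDerivAt z (g (z t)) t)
    (Δt : ℝ) (hΔt : Δt = (b - a) / ((nT : ℝ) - 1))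
    (zh : ℕ → Euc m) (hzh0 : zh 0 = z a)
    (hzh : ∀ k : ℕ, zh (k + 1) = zh k + Δt • ghat (zh k)) :
    ∀ k : ℕ, k + 1 ≤ nT - 1 →
      ‖z (a + ((k : ℝ) + 1) * Δt) - zh (k + 1)‖ ≤
        3 * (b - a) * Real.exp (L * (b - a)) * δ +
          L * G / 2 * (b - a) * Real.exp (L * (b - a)) * Δt := by
  intro k hk
  set n := nT - 1
  have hn0 : (0 : ℝ) < n := by exact_mod_cast (by omega : 0 < n)
  have hnΔt : n * Δt = b - a := by
    rw [hΔt, show (nT : ℝ) - 1 = n by rw [Nat.cast_sub (by omega), Nat.cast_one]]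
    field_simp
  have hΔt0 : 0 ≤ Δt := nonneg_of_mul_nonneg_right (hnΔt ▸ sub_nonneg.2 hab) hn0
  set t : ℕ → ℝ := fun j => a + j * Δt with ht
  have ht_succ : ∀ j, t (j + 1) = t j + Δt := fun j => by simp only [ht]; push_cast; ring
  have ht_mem : ∀ j ≤ n, t j ∈ Icc a b := fun j hj => by
    have : (j : ℝ) * Δt ≤ n * Δt := by gcongr
    exact ⟨le_add_of_nonneg_right (by positivity), by simp only [ht]; linarith⟩
  have hstep : ∀ j < n, ‖z (t (j + 1)) - zh (j + 1)‖ ≤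
      (1 + L * Δt) * ‖z (t j) - zh j‖ + (Δt * δ + L * G / 2 * Δt ^ 2) := fun j hj => by
    have hsub : Icc (t j) (t j + Δt) ⊆ Icc a b :=
      Icc_subset_Icc (ht_mem j hj.le).1 (ht_succ j ▸ (ht_mem (j + 1) hj).2)
    rw [hzh j, ht_succ j]
    exact norm_sub_eulerStep_le_of_hasDerivAt hL hg hG hδ (fun s hs => hz s (hsub hs)) hΔt0 _
  have hglobal := le_mul_exp_of_le_one_add_mul_add (u := fun j => ‖z (t j) - zh j‖)
    (fun _ => norm_nonneg _) (by simp [ht, hzh0]) (mul_nonneg hL hΔt0)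
    (by have := (norm_nonneg _).trans (hδ 0); have := (norm_nonneg _).trans (hG 0); positivity)
    hstep hk
  calc _ = ‖z (t (k + 1)) - zh (k + 1)‖ := by simp only [ht]; push_cast; rfl
    _ ≤ n * (Δt * δ + L * G / 2 * Δt ^ 2) * exp (n * (L * Δt)) := hglobal
    _ = (b - a) * exp (L * (b - a)) * δ + L * G / 2 * (b - a) * exp (L * (b - a)) * Δt := by
      rw [← hnΔt]; ring_nf
    _ ≤ _ := by
      have : 0 ≤ (b - a) * exp (L * (b - a)) * δ := by
        have := sub_nonneg.2 hab; have := (norm_nonneg _).trans (hδ 0); positivity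
      linarith

end
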